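/- Let θ ∈ (0, π/2) and let u be a model eigenfunction of H(θ) with eigenvalue σ. Then ∫_{ℝ²₊} |∂_s u|² ds dt = − sin θ · ∫_{ℝ²₊} s V_θ(s,t) u(s,t)² ds dt. -/

import Mathlib

open Real MeasureTheory Set

noncomputable section

/-- Partial derivative with respect to the first variable. -/
def pd1 (u : ℝ → ℝ → ℝ) : ℝ → ℝ → ℝ := fun s t => deriv (fun x => u x t) s

/-- Partial derivative with respect to the second variable. -/
def pd2 (u : ℝ → ℝ → ℝ) : ℝ → ℝ → ℝ := fun s t => deriv (fun y => u s y) t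

/-- The potential `V_θ(s,t) = t cos θ − s sin θ`. -/
def Vpot (θ : ℝ) : ℝ → ℝ → ℝ := fun s t => t * Real.cos θ - s * Real.sin θ

/-- The operator `H(θ) = −∂_s² − ∂_t² + V_θ²` applied to `u`. -/
def Hop (θ : ℝ) (u : ℝ → ℝ → ℝ) : ℝ → ℝ → ℝ :=
  fun s t => - pd1 (pd1 u) s t - pd2 (pd2 u) s t + (Vpot θ s t)^2 * u s t

/-- Integral over the half-plane `{t > 0}` with respect to `ds dt`. -/
def intHalf (f : ℝ → ℝ → ℝ) : ℝ := ∫ s : ℝ, ∫ t in Set.Ioi (0:ℝ), f s t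

/-- Schwartz-class on the closed half-plane: all iterated partial derivatives decay
faster than any power of `|s| + t`. -/
def SchwartzHalf (u : ℝ → ℝ → ℝ) : Prop :=
  ∀ k l n : ℕ, ∃ C : ℝ, ∀ s t : ℝ, 0 ≤ t →
    |pd1^[k] (pd2^[l] u) s t| ≤ C * (1 + |s| + t) ^ (-(n:ℝ))

/-- A model eigenfunction of `H(θ)` with eigenvalue `σ`: smooth up to the boundary,
Schwartz-class, `L²`-normalized, Neumann boundary condition, and `H(θ)u = σu` on `{t ≥ 0}`. -/
structure IsModelEigen (θ : ℝ) (u : ℝ → ℝ → ℝ) (σ : ℝ) : Prop where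
  smooth : ∀ n : ℕ, ContDiff ℝ n (fun p : ℝ × ℝ => u p.1 p.2)
  schwartz : SchwartzHalf u
  normalized : intHalf (fun s t => (u s t)^2) = 1
  neumann : ∀ s : ℝ, pd2 u s 0 = 0
  eigen : ∀ s t : ℝ, 0 ≤ t → Hop θ u s t = σ * u s t

/-!
Multiply the eigenvalue equation by the virial multiplier `s ∂ₛu + u / 2`. Pointwise,
`(∂ₛu)² + sin θ · s V_θ u²` is that product plus the divergence `∂ₛP + ∂ₜQ` of an explicit
flux `(P, Q) = (fluxS, fluxT)`. Integrated over the half-plane, `∂ₛP` contributes nothing since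
everything decays as `|s| → ∞`, and `∂ₜQ` contributes only the boundary term `-Q(s, 0)`, which
vanishes by the Neumann condition.
-/

open Function Filter Topology

section PartialDerivatives

variable {u : ℝ → ℝ → ℝ}

theorem pd1_eq_fderiv {s t : ℝ} (hu : DifferentiableAt ℝ (uncurry u) (s, t)) :
    pd1 u s t = fderiv ℝ (uncurry u) (s, t) (1, 0) :=
  (hu.hasFDerivAt.comp_hasDerivAt (f := fun x => (x, t)) s
    ((hasDerivAt_id s).prodMk (hasDerivAt_const s t))).deriv

theorem pd2_eq_fderiv {s t : ℝ} (hu : DifferentiableAt ℝ (uncurry u) (s, t)) :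
    pd2 u s t = fderiv ℝ (uncurry u) (s, t) (0, 1) :=
  (hu.hasFDerivAt.comp_hasDerivAt (f := fun y => (s, y)) t
    ((hasDerivAt_const t s).prodMk (hasDerivAt_id t))).deriv

theorem uncurry_pd1 (hu : Differentiable ℝ (uncurry u)) :
    uncurry (pd1 u) = fun p => fderiv ℝ (uncurry u) p (1, 0) :=
  funext fun p => pd1_eq_fderiv (hu p)

theorem uncurry_pd2 (hu : Differentiable ℝ (uncurry u)) :
    uncurry (pd2 u) = fun p => fderiv ℝ (uncurry u) p (0, 1) :=
  funext fun p => pd2_eq_fderiv (hu p)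

theorem hasDerivAt_pd1 {s t : ℝ} (hu : DifferentiableAt ℝ (uncurry u) (s, t)) :
    HasDerivAt (fun x => u x t) (pd1 u s t) s :=
  (hu.comp (f := fun x => (x, t)) s
    (differentiableAt_id.prodMk (differentiableAt_const t))).hasDerivAt

theorem hasDerivAt_pd2 {s t : ℝ} (hu : DifferentiableAt ℝ (uncurry u) (s, t)) :
    HasDerivAt (fun y => u s y) (pd2 u s t) t :=
  (hu.comp (f := fun y => (s, y)) t
    ((differentiableAt_const s).prodMk differentiableAt_id)).hasDerivAt

theorem contDiff_uncurry_pd1 {m n : WithTop ℕ∞} (hu : ContDiff ℝ n (uncurry u)) (hmn : m + 1 ≤ n) :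
    ContDiff ℝ m (uncurry (pd1 u)) := by
  have hn : n ≠ 0 := by rintro rfl; simp at hmn
  rw [uncurry_pd1 (hu.differentiable hn)]
  exact (hu.fderiv_right hmn).clm_apply contDiff_const

theorem contDiff_uncurry_pd2 {m n : WithTop ℕ∞} (hu : ContDiff ℝ n (uncurry u)) (hmn : m + 1 ≤ n) :
    ContDiff ℝ m (uncurry (pd2 u)) := by
  have hn : n ≠ 0 := by rintro rfl; simp at hmn
  rw [uncurry_pd2 (hu.differentiable hn)]
  exact (hu.fderiv_right hmn).clm_apply contDiff_const

theorem pd2_pd1 (hu : ContDiff ℝ 2 (uncurry u)) : pd2 (pd1 u) = pd1 (pd2 u) := by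
  have hd : Differentiable ℝ (uncurry u) := hu.differentiable (by simp)
  have hdd : Differentiable ℝ (fderiv ℝ (uncurry u)) :=
    (hu.fderiv_right (m := 1) (by norm_num)).differentiable (by simp)
  ext s t
  rw [pd2_eq_fderiv ((contDiff_uncurry_pd1 (m := 1) hu (by norm_num)).differentiable (by simp) _),
    pd1_eq_fderiv ((contDiff_uncurry_pd2 (m := 1) hu (by norm_num)).differentiable (by simp) _),
    uncurry_pd1 hd, uncurry_pd2 hd, fderiv_clm_apply (hdd _) (differentiableAt_const _),
    fderiv_clm_apply (hdd _) (differentiableAt_const _)]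
  simpa using (hu.contDiffAt (x := (s, t))).isSymmSndFDerivAt (by simp) (0, 1) (1, 0)

end PartialDerivatives

section Decay

theorem one_le_one_add_abs_add {s t : ℝ} (ht : 0 ≤ t) : 1 ≤ 1 + |s| + t := by
  have := abs_nonneg s; linarith

structure Tempered (w : ℝ → ℝ → ℝ) : Prop where
  continuous : Continuous (uncurry w)
  bound : ∃ k : ℕ, ∃ C, ∀ s t, 0 ≤ t → |w s t| ≤ C * (1 + |s| + t) ^ k

structure RapidDecay (f : ℝ → ℝ → ℝ) : Prop where
  continuous : Continuous (uncurry f)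
  decay : ∀ n : ℕ, ∃ C, ∀ s t, 0 ≤ t → |f s t| * (1 + |s| + t) ^ n ≤ C

variable {f g w v : ℝ → ℝ → ℝ}

namespace Tempered

theorem const (c : ℝ) : Tempered fun _ _ => c :=
  ⟨continuous_const, 0, |c|, fun _ _ _ => by simp⟩

theorem fst : Tempered fun s _ => s :=
  ⟨continuous_fst, 1, 1, fun s t ht => by rw [one_mul, pow_one]; linarith [abs_nonneg s]⟩

theorem vpot (θ : ℝ) : Tempered (Vpot θ) := by
  refine ⟨by unfold Vpot; fun_prop, 1, 1, fun s t ht => ?_⟩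
  have hcos : |t * cos θ| ≤ t := by
    rw [abs_mul, abs_of_nonneg ht]; exact mul_le_of_le_one_right ht (abs_cos_le_one θ)
  have hsin : |s * sin θ| ≤ |s| := by
    rw [abs_mul]; exact mul_le_of_le_one_right (abs_nonneg s) (abs_sin_le_one θ)
  calc |Vpot θ s t| ≤ |t * cos θ| + |s * sin θ| := abs_sub _ _
    _ ≤ 1 * (1 + |s| + t) ^ 1 := by linarith

theorem mul (hw : Tempered w) (hv : Tempered v) : Tempered fun s t => w s t * v s t := by
  obtain ⟨k, C, hC⟩ := hw.bound
  obtain ⟨l, D, hD⟩ := hv.bound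
  refine ⟨hw.continuous.mul hv.continuous, k + l, C * D, fun s t ht => ?_⟩
  have hC0 : 0 ≤ C * (1 + |s| + t) ^ k := (abs_nonneg _).trans (hC s t ht)
  rw [abs_mul, pow_add]
  calc |w s t| * |v s t| ≤ (C * (1 + |s| + t) ^ k) * (D * (1 + |s| + t) ^ l) :=
        mul_le_mul (hC s t ht) (hD s t ht) (abs_nonneg _) hC0
    _ = C * D * ((1 + |s| + t) ^ k * (1 + |s| + t) ^ l) := by ring

theorem sub (hw : Tempered w) (hv : Tempered v) : Tempered fun s t => w s t - v s t := by
  obtain ⟨k, C, hC⟩ := hw.bound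
  obtain ⟨l, D, hD⟩ := hv.bound
  refine ⟨hw.continuous.sub hv.continuous, k + l, |C| + |D|, fun s t ht => ?_⟩
  have hx := one_le_one_add_abs_add (s := s) ht
  have hk : (1 + |s| + t) ^ k ≤ (1 + |s| + t) ^ (k + l) := pow_le_pow_right₀ hx (by omega)
  have hl : (1 + |s| + t) ^ l ≤ (1 + |s| + t) ^ (k + l) := pow_le_pow_right₀ hx (by omega)
  calc |w s t - v s t| ≤ |w s t| + |v s t| := abs_sub _ _
    _ ≤ C * (1 + |s| + t) ^ k + D * (1 + |s| + t) ^ l := add_le_add (hC s t ht) (hD s t ht)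
    _ ≤ |C| * (1 + |s| + t) ^ (k + l) + |D| * (1 + |s| + t) ^ (k + l) := by
        gcongr ?_ + ?_
        · exact mul_le_mul (le_abs_self C) hk (by positivity) (abs_nonneg C)
        · exact mul_le_mul (le_abs_self D) hl (by positivity) (abs_nonneg D)
    _ = (|C| + |D|) * (1 + |s| + t) ^ (k + l) := by ring

theorem pow (hw : Tempered w) (n : ℕ) : Tempered fun s t => w s t ^ n := by
  obtain ⟨k, C, hC⟩ := hw.bound
  refine ⟨hw.continuous.pow n, k * n, C ^ n, fun s t ht => ?_⟩
  rw [abs_pow, pow_mul, ← mul_pow]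
  exact pow_le_pow_left₀ (abs_nonneg _) (hC s t ht) n

end Tempered

namespace RapidDecay

theorem tempered (hf : RapidDecay f) : Tempered f := by
  obtain ⟨C, hC⟩ := hf.decay 0
  exact ⟨hf.continuous, 0, C, fun s t ht => by simpa using hC s t ht⟩

theorem add (hf : RapidDecay f) (hg : RapidDecay g) : RapidDecay fun s t => f s t + g s t := by
  refine ⟨hf.continuous.add hg.continuous, fun n => ?_⟩
  obtain ⟨C, hC⟩ := hf.decay n
  obtain ⟨D, hD⟩ := hg.decay n
  refine ⟨C + D, fun s t ht => ?_⟩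
  have hx : 0 ≤ (1 + |s| + t) ^ n := by positivity
  calc |f s t + g s t| * (1 + |s| + t) ^ n
      ≤ |f s t| * (1 + |s| + t) ^ n + |g s t| * (1 + |s| + t) ^ n := by
        rw [← add_mul]; exact mul_le_mul_of_nonneg_right (abs_add_le _ _) hx
    _ ≤ C + D := add_le_add (hC s t ht) (hD s t ht)

theorem neg (hf : RapidDecay f) : RapidDecay fun s t => -f s t :=
  ⟨hf.continuous.neg, fun n => by simpa only [abs_neg] using hf.decay n⟩

theorem sub (hf : RapidDecay f) (hg : RapidDecay g) : RapidDecay fun s t => f s t - g s t := by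
  simpa only [sub_eq_add_neg] using hf.add hg.neg

theorem mul_left (hw : Tempered w) (hf : RapidDecay f) : RapidDecay fun s t => w s t * f s t := by
  refine ⟨hw.continuous.mul hf.continuous, fun n => ?_⟩
  obtain ⟨k, C, hC⟩ := hw.bound
  obtain ⟨D, hD⟩ := hf.decay (k + n)
  refine ⟨|C| * D, fun s t ht => ?_⟩
  have hw' : |w s t| ≤ |C| * (1 + |s| + t) ^ k :=
    (hC s t ht).trans (mul_le_mul_of_nonneg_right (le_abs_self C) (by positivity))
  calc |w s t * f s t| * (1 + |s| + t) ^ n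
      ≤ |C| * (1 + |s| + t) ^ k * |f s t| * (1 + |s| + t) ^ n := by
        rw [abs_mul]; gcongr
    _ = |C| * (|f s t| * (1 + |s| + t) ^ (k + n)) := by ring
    _ ≤ |C| * D := mul_le_mul_of_nonneg_left (hD s t ht) (abs_nonneg C)

theorem mul_right (hf : RapidDecay f) (hw : Tempered w) : RapidDecay fun s t => f s t * w s t := by
  simpa only [mul_comm] using mul_left hw hf

theorem div_const (hf : RapidDecay f) (c : ℝ) : RapidDecay fun s t => f s t / c := by
  simpa only [div_eq_mul_inv, mul_comm] using mul_left (Tempered.const c⁻¹) hf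

theorem pow (hf : RapidDecay f) {n : ℕ} (hn : n ≠ 0) : RapidDecay fun s t => f s t ^ n := by
  obtain ⟨n, rfl⟩ := Nat.exists_eq_succ_of_ne_zero hn
  simpa only [pow_succ] using mul_left (hf.tempered.pow n) hf

end RapidDecay

end Decay

theorem one_add_sq_mul_one_add_sq_le {s t : ℝ} (ht : 0 ≤ t) :
    (1 + s ^ 2) * (1 + t ^ 2) ≤ (1 + |s| + t) ^ 4 := by
  have ha := abs_nonneg s
  rw [← sq_abs s]
  nlinarith [sq_nonneg (|s| * t), sq_nonneg (|s| + t), sq_nonneg (|s| - t), mul_nonneg ha ht]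

namespace RapidDecay

variable {f : ℝ → ℝ → ℝ}

theorem abs_le_div (hf : RapidDecay f) (n : ℕ) :
    ∃ C, ∀ s t, 0 ≤ t → |f s t| ≤ C / (1 + |s| + t) ^ n := by
  obtain ⟨C, hC⟩ := hf.decay n
  exact ⟨C, fun s t ht => (le_div_iff₀ (by positivity)).2 (hC s t ht)⟩

theorem integrable (hf : RapidDecay f) :
    Integrable (uncurry f) ((volume : Measure ℝ).prod (volume.restrict (Ioi 0))) := by
  obtain ⟨C, hC⟩ := hf.abs_le_div 4
  have hdom : Integrable (fun p : ℝ × ℝ => C * ((1 + p.1 ^ 2)⁻¹ * (1 + p.2 ^ 2)⁻¹))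
      ((volume : Measure ℝ).prod (volume.restrict (Ioi 0))) :=
    (integrable_inv_one_add_sq.mul_prod integrable_inv_one_add_sq.restrict).const_mul C
  refine hdom.mono' hf.continuous.aestronglyMeasurable ?_
  filter_upwards [Measure.quasiMeasurePreserving_snd.ae (ae_restrict_mem measurableSet_Ioi)]
    with ⟨s, t⟩ (ht : 0 < t)
  have hf4 := hC s t ht.le
  have hC0 : 0 ≤ C := by
    have h := (abs_nonneg _).trans hf4
    rwa [le_div_iff₀ (by positivity), zero_mul] at h
  calc ‖f s t‖ ≤ C / (1 + |s| + t) ^ 4 := hf4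
    _ ≤ C / ((1 + s ^ 2) * (1 + t ^ 2)) :=
        div_le_div_of_nonneg_left hC0 (by positivity) (one_add_sq_mul_one_add_sq_le ht.le)
    _ = C * ((1 + s ^ 2)⁻¹ * (1 + t ^ 2)⁻¹) := by rw [div_eq_mul_inv, mul_inv]

theorem tendsto_fst {l : Filter ℝ} (hf : RapidDecay f) (hl : Tendsto (fun s => |s|) l atTop)
    {t : ℝ} (ht : 0 ≤ t) : Tendsto (fun s => f s t) l (𝓝 0) := by
  obtain ⟨C, hC⟩ := hf.abs_le_div 1
  refine squeeze_zero_norm (fun s => by simpa using hC s t ht) ?_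
  simpa using tendsto_const_nhds.div_atTop
    (tendsto_atTop_add_const_right l t (tendsto_atTop_add_const_left l 1 hl))

theorem tendsto_snd (hf : RapidDecay f) (s : ℝ) : Tendsto (f s) atTop (𝓝 0) := by
  obtain ⟨C, hC⟩ := hf.abs_le_div 1
  refine squeeze_zero_norm' ((eventually_ge_atTop 0).mono fun t ht => by simpa using hC s t ht) ?_
  simpa using tendsto_const_nhds.div_atTop (tendsto_atTop_add_const_left atTop (1 + |s|) tendsto_id)

end RapidDecay

section HalfPlaneIntegral

local notation "μ₊" => Measure.prod (volume : Measure ℝ) (Measure.restrict volume (Ioi (0 : ℝ)))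

variable {f g : ℝ → ℝ → ℝ}

theorem intHalf_eq_integral (hf : Integrable (uncurry f) μ₊) :
    intHalf f = ∫ p, uncurry f p ∂μ₊ :=
  (integral_prod _ hf).symm

theorem intHalf_add (hf : Integrable (uncurry f) μ₊) (hg : Integrable (uncurry g) μ₊) :
    intHalf (fun s t => f s t + g s t) = intHalf f + intHalf g := by
  rw [intHalf_eq_integral (f := fun s t => f s t + g s t) (hf.add hg), intHalf_eq_integral hf,
    intHalf_eq_integral hg]
  exact integral_add hf hg

theorem intHalf_const_mul (c : ℝ) (f : ℝ → ℝ → ℝ) :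
    intHalf (fun s t => c * f s t) = c * intHalf f := by
  simp only [intHalf, integral_const_mul]

theorem intHalf_congr (h : ∀ s t, 0 < t → f s t = g s t) : intHalf f = intHalf g :=
  integral_congr_ae (ae_of_all _ fun s => setIntegral_congr_fun measurableSet_Ioi (h s))

theorem intHalf_eq_zero_of_hasDerivAt_fst {P P' : ℝ → ℝ → ℝ}
    (hP : ∀ s t, 0 < t → HasDerivAt (fun x => P x t) (P' s t) s)
    (hP' : Integrable (uncurry P') μ₊)
    (hbot : ∀ t, 0 < t → Tendsto (fun s => P s t) atBot (𝓝 0))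
    (htop : ∀ t, 0 < t → Tendsto (fun s => P s t) atTop (𝓝 0)) :
    intHalf P' = 0 := by
  rw [intHalf_eq_integral hP', integral_prod_symm _ hP']
  refine integral_eq_zero_of_ae ?_
  filter_upwards [hP'.prod_left_ae, ae_restrict_mem measurableSet_Ioi] with t hint (ht : 0 < t)
  simpa using integral_of_hasDerivAt_of_tendsto (fun s => hP s t ht) hint (hbot t ht) (htop t ht)

theorem intHalf_eq_zero_of_hasDerivAt_snd {Q Q' : ℝ → ℝ → ℝ}
    (hQ : ∀ s t, 0 ≤ t → HasDerivAt (Q s) (Q' s t) t)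
    (hQ' : Integrable (uncurry Q') μ₊)
    (hzero : ∀ s, Q s 0 = 0)
    (htop : ∀ s, Tendsto (Q s) atTop (𝓝 0)) :
    intHalf Q' = 0 := by
  refine integral_eq_zero_of_ae ?_
  filter_upwards [hQ'.prod_right_ae] with s hint
  simpa [hzero] using
    integral_Ioi_of_hasDerivAt_of_tendsto' (fun t ht => hQ s t ht) hint (htop s)

end HalfPlaneIntegral

section Flux

def fluxS (θ σ : ℝ) (u : ℝ → ℝ → ℝ) : ℝ → ℝ → ℝ := fun s t =>
  u s t * pd1 u s t / 2 + s * (pd1 u s t ^ 2 - pd2 u s t ^ 2 - (Vpot θ s t ^ 2 - σ) * u s t ^ 2) / 2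

def fluxS' (θ σ : ℝ) (u : ℝ → ℝ → ℝ) : ℝ → ℝ → ℝ := fun s t =>
  (pd1 u s t ^ 2 + u s t * pd1 (pd1 u) s t) / 2
    + (pd1 u s t ^ 2 - pd2 u s t ^ 2 - (Vpot θ s t ^ 2 - σ) * u s t ^ 2) / 2
    + s * (pd1 u s t * pd1 (pd1 u) s t - pd2 u s t * pd1 (pd2 u) s t
      + sin θ * Vpot θ s t * u s t ^ 2 - (Vpot θ s t ^ 2 - σ) * u s t * pd1 u s t)

def fluxT (u : ℝ → ℝ → ℝ) : ℝ → ℝ → ℝ := fun s t =>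
  (s * pd1 u s t + u s t / 2) * pd2 u s t

def fluxT' (u : ℝ → ℝ → ℝ) : ℝ → ℝ → ℝ := fun s t =>
  (s * pd1 (pd2 u) s t + pd2 u s t / 2) * pd2 u s t
    + (s * pd1 u s t + u s t / 2) * pd2 (pd2 u) s t

theorem sq_pd1_add_eq_flux (θ σ : ℝ) (u : ℝ → ℝ → ℝ) (s t : ℝ) :
    pd1 u s t ^ 2 + sin θ * (s * Vpot θ s t * u s t ^ 2) =
      fluxS' θ σ u s t + fluxT' u s t
        + (s * pd1 u s t + u s t / 2) * (Hop θ u s t - σ * u s t) := by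
  simp only [fluxS', fluxT', Hop]
  ring

variable {u : ℝ → ℝ → ℝ}

theorem hasDerivAt_vpot_fst (θ s t : ℝ) : HasDerivAt (fun x => Vpot θ x t) (-sin θ) s := by
  simpa [Vpot] using ((hasDerivAt_id s).mul_const (sin θ)).const_sub (t * cos θ)

theorem hasDerivAt_fluxS (hu : ContDiff ℝ 2 (uncurry u)) (θ σ s t : ℝ) :
    HasDerivAt (fun x => fluxS θ σ u x t) (fluxS' θ σ u s t) s := by
  have hU := hasDerivAt_pd1 (hu.differentiable (by simp) (s, t))
  have hA := hasDerivAt_pd1 ((contDiff_uncurry_pd1 (m := 1) hu (by norm_num)).differentiable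
    (by simp) (s, t))
  have hB := hasDerivAt_pd1 ((contDiff_uncurry_pd2 (m := 1) hu (by norm_num)).differentiable
    (by simp) (s, t))
  have hV := hasDerivAt_vpot_fst θ s t
  refine (((hU.mul hA).div_const 2).add (((hasDerivAt_id s).mul (((hA.pow 2).sub (hB.pow 2)).sub
    (((hV.pow 2).sub_const σ).mul (hU.pow 2)))).div_const 2)).congr_deriv ?_
  simp only [fluxS', Pi.mul_apply, Pi.pow_apply, Pi.sub_apply, id]
  ring

theorem hasDerivAt_fluxT (hu : ContDiff ℝ 2 (uncurry u)) (s t : ℝ) :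
    HasDerivAt (fluxT u s) (fluxT' u s t) t := by
  have hU := hasDerivAt_pd2 (hu.differentiable (by simp) (s, t))
  have hA := hasDerivAt_pd2 ((contDiff_uncurry_pd1 (m := 1) hu (by norm_num)).differentiable
    (by simp) (s, t))
  have hB := hasDerivAt_pd2 ((contDiff_uncurry_pd2 (m := 1) hu (by norm_num)).differentiable
    (by simp) (s, t))
  rw [pd2_pd1 hu] at hA
  exact ((hA.const_mul s).add (hU.div_const 2)).mul hB

theorem fluxT_zero (hu : ∀ s, pd2 u s 0 = 0) (s : ℝ) : fluxT u s 0 = 0 := by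
  simp [fluxT, hu s]

end Flux

section FluxDecay

variable {u : ℝ → ℝ → ℝ}

theorem SchwartzHalf.rapidDecay (hS : SchwartzHalf u) (k l : ℕ)
    (hc : Continuous (uncurry (pd1^[k] (pd2^[l] u)))) : RapidDecay (pd1^[k] (pd2^[l] u)) := by
  refine ⟨hc, fun n => ?_⟩
  obtain ⟨C, hC⟩ := hS k l n
  refine ⟨C, fun s t ht => ?_⟩
  have hx : 0 < 1 + |s| + t := by positivity
  rw [← le_div_iff₀ (by positivity), div_eq_mul_inv, ← rpow_natCast, ← rpow_neg hx.le]
  exact hC s t ht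

theorem SchwartzHalf.rapidDecay_partials (hS : SchwartzHalf u) (hu : ContDiff ℝ 2 (uncurry u)) :
    RapidDecay u ∧ RapidDecay (pd1 u) ∧ RapidDecay (pd2 u) ∧
      RapidDecay (pd1 (pd1 u)) ∧ RapidDecay (pd1 (pd2 u)) ∧ RapidDecay (pd2 (pd2 u)) := by
  have hA : ContDiff ℝ 1 (uncurry (pd1 u)) := contDiff_uncurry_pd1 hu (by norm_num)
  have hB : ContDiff ℝ 1 (uncurry (pd2 u)) := contDiff_uncurry_pd2 hu (by norm_num)
  exact ⟨hS.rapidDecay 0 0 hu.continuous, hS.rapidDecay 1 0 hA.continuous,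
    hS.rapidDecay 0 1 hB.continuous,
    hS.rapidDecay 2 0 (contDiff_uncurry_pd1 (m := 0) hA (by norm_num)).continuous,
    hS.rapidDecay 1 1 (contDiff_uncurry_pd1 (m := 0) hB (by norm_num)).continuous,
    hS.rapidDecay 0 2 (contDiff_uncurry_pd2 (m := 0) hB (by norm_num)).continuous⟩

theorem rapidDecay_fluxS (hU : RapidDecay u) (hA : RapidDecay (pd1 u)) (hB : RapidDecay (pd2 u))
    (θ σ : ℝ) : RapidDecay (fluxS θ σ u) := by
  unfold fluxS
  apply_rules (maxDepth := 100) [RapidDecay.sub, RapidDecay.add, RapidDecay.div_const,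
    RapidDecay.pow, two_ne_zero, RapidDecay.mul_left, Tempered.const, Tempered.fst, Tempered.vpot,
    Tempered.sub, Tempered.pow, Tempered.mul, RapidDecay.tempered]

theorem rapidDecay_fluxS' (hU : RapidDecay u) (hA : RapidDecay (pd1 u)) (hB : RapidDecay (pd2 u))
    (hAA : RapidDecay (pd1 (pd1 u))) (hAB : RapidDecay (pd1 (pd2 u))) (θ σ : ℝ) :
    RapidDecay (fluxS' θ σ u) := by
  unfold fluxS'
  apply_rules (maxDepth := 100) [RapidDecay.sub, RapidDecay.add, RapidDecay.div_const,
    RapidDecay.pow, two_ne_zero, RapidDecay.mul_left, Tempered.const, Tempered.fst, Tempered.vpot,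
    Tempered.sub, Tempered.pow, Tempered.mul, RapidDecay.tempered]

theorem rapidDecay_fluxT (hU : RapidDecay u) (hA : RapidDecay (pd1 u)) (hB : RapidDecay (pd2 u)) :
    RapidDecay (fluxT u) :=
  ((hA.mul_left Tempered.fst).add (hU.div_const 2)).mul_right hB.tempered

theorem rapidDecay_fluxT' (hU : RapidDecay u) (hA : RapidDecay (pd1 u)) (hB : RapidDecay (pd2 u))
    (hAB : RapidDecay (pd1 (pd2 u))) (hBB : RapidDecay (pd2 (pd2 u))) :
    RapidDecay (fluxT' u) :=
  (((hAB.mul_left Tempered.fst).add (hB.div_const 2)).mul_right hB.tempered).add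
    (((hA.mul_left Tempered.fst).add (hU.div_const 2)).mul_right hBB.tempered)

end FluxDecay

theorem virial_s_general (θ : ℝ)
    (u : ℝ → ℝ → ℝ) (σ : ℝ) (hu : IsModelEigen θ u σ) :
    intHalf (fun s t => (pd1 u s t)^2) =
      - Real.sin θ * intHalf (fun s t => s * Vpot θ s t * (u s t)^2) := by
  have hC : ContDiff ℝ 2 (uncurry u) := by exact_mod_cast hu.smooth 2
  obtain ⟨hU, hA, hB, hAA, hAB, hBB⟩ := hu.schwartz.rapidDecay_partials hC
  have hS := rapidDecay_fluxS hU hA hB θ σ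
  have hT := rapidDecay_fluxT hU hA hB
  have hS' := rapidDecay_fluxS' hU hA hB hAA hAB θ σ
  have hT' := rapidDecay_fluxT' hU hA hB hAB hBB
  have hS'_zero : intHalf (fluxS' θ σ u) = 0 :=
    intHalf_eq_zero_of_hasDerivAt_fst (fun s t _ => hasDerivAt_fluxS hC θ σ s t) hS'.integrable
      (fun t ht => hS.tendsto_fst tendsto_abs_atBot_atTop ht.le)
      (fun t ht => hS.tendsto_fst tendsto_abs_atTop_atTop ht.le)
  have hT'_zero : intHalf (fluxT' u) = 0 :=
    intHalf_eq_zero_of_hasDerivAt_snd (fun s t _ => hasDerivAt_fluxT hC s t) hT'.integrable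
      (fluxT_zero hu.neumann) hT.tendsto_snd
  have hflux : intHalf (fun s t => pd1 u s t ^ 2 + sin θ * (s * Vpot θ s t * u s t ^ 2)) =
      intHalf (fun s t => fluxS' θ σ u s t + fluxT' u s t) :=
    intHalf_congr fun s t ht => by
      rw [sq_pd1_add_eq_flux θ σ, hu.eigen s t ht.le, sub_self, mul_zero, add_zero]
  rw [intHalf_add (hA.pow two_ne_zero).integrable
      (((hU.pow two_ne_zero).mul_left (Tempered.fst.mul (Tempered.vpot θ))).mul_left
        (Tempered.const (sin θ))).integrable,
    intHalf_const_mul, intHalf_add hS'.integrable hT'.integrable, hS'_zero, hT'_zero] at hflux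
  linarith

/-- `∫ |∂_s u|² = − sin θ ∫ s V_θ u²`. -/
theorem virial_s (θ : ℝ) (hθ : θ ∈ Set.Ioo 0 (π/2))
    (u : ℝ → ℝ → ℝ) (σ : ℝ) (hu : IsModelEigen θ u σ) :
    intHalf (fun s t => (pd1 u s t)^2) =
      - Real.sin θ * intHalf (fun s t => s * Vpot θ s t * (u s t)^2) :=
  virial_s_general θ u σ hu
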